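/- Let G be an undirected graph with distinct nodes s and t, and let F be a balanced arc set in G⃗ such that the residual digraph G⃗_F contains no s–t path. Then val(F) is maximum among all balanced arc sets, and the set U of nodes reachable from s in G⃗_F satisfies d_G(U) = val(F); moreover, U is the inclusion-wise minimum set among all sets U' with s ∈ U', t ∉ U', and d_G(U') = val(F). -/

import Mathlib

/-!
We encode a multigraph on vertex type `V` with edge-index type `E` by a map
`G : E → V × V`: the edge with index `e` joins the (unordered) endpoints
`(G e).1` and `(G e).2`.
-/

/-- The degree of `v` in the multigraph `G`: the number of edge-ends of `G`
incident to `v` (a loop counts twice). -/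
noncomputable def mdeg {V E : Type} (G : E → V × V) (v : V) : ℕ :=
  Set.ncard {p : E × Bool | (cond p.2 (G p.1).1 (G p.1).2) = v}

/-- `mcut G U` is `d_G(U)`: the number of edges of `G` having exactly one
endpoint in `U`. -/
noncomputable def mcut {V E : Type} (G : E → V × V) (U : Set V) : ℕ :=
  Set.ncard {e : E | ((G e).1 ∈ U ∧ (G e).2 ∉ U) ∨ ((G e).2 ∈ U ∧ (G e).1 ∉ U)}

/-- Walks in the multigraph `G`; an edge may be traversed in either direction. -/
inductive MWalk {V E : Type} (G : E → V × V) : V → V → Type where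
  | nil (v : V) : MWalk G v v
  | cons {u v w : V} (e : E) (he : G e = (u, v) ∨ G e = (v, u)) (tail : MWalk G v w) :
      MWalk G u w

namespace MWalk
/-- The list of edges traversed by a walk. -/
def edges {V E : Type} {G : E → V × V} : {u v : V} → MWalk G u v → List E
  | _, _, nil _ => []
  | _, _, cons e _ p => e :: p.edges
end MWalk

/-- An instance `(G, H)` (`H` is the demand multigraph, on the same vertex set)
is feasible if the demand edges can be routed by pairwise edge-disjoint paths
of `G`: for each demand edge `i` there is a walk of `G` connecting its two
endpoints, the walks being pairwise edge-disjoint. -/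
def MFeasible {V E E' : Type} (G : E → V × V) (H : E' → V × V) : Prop :=
  ∃ P : (i : E') → MWalk G (H i).1 (H i).2,
    ∀ i j : E', i ≠ j → List.Disjoint (P i).edges (P j).edges

/-- The multigraph `G` is connected (all of its vertex set lies in one
connected component). -/
def MConnected {V E : Type} (G : E → V × V) : Prop :=
  ∀ u v : V, Nonempty (MWalk G u v)

/-- The subgraph `G[U]` induced by `U` is connected: any two vertices of `U`
are joined by a walk all of whose edges have both endpoints in `U`. -/
def MInducedConnected {V E : Type} (G : E → V × V) (U : Set V) : Prop :=
  ∀ u ∈ U, ∀ v ∈ U, ∃ p : MWalk G u v, ∀ e ∈ p.edges, (G e).1 ∈ U ∧ (G e).2 ∈ U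

/-- The instance `(G, H)` is Eulerian: every vertex of `G + H` has even degree. -/
def MEulerian {V E E' : Type} (G : E → V × V) (H : E' → V × V) : Prop :=
  ∀ v : V, Even (mdeg G v + mdeg H v)

/-!
The digraph `G⃗` associated with the multigraph `G : E → V × V` has the arc set
`E × Bool`: the arc `(e, true)` traverses edge `e` from `(G e).1` to `(G e).2`,
and `(e, false)` is the oppositely directed arc.
-/

/-- The tail of an arc of `G⃗`. -/
def arcTail {V E : Type} (G : E → V × V) (a : E × Bool) : V :=
  cond a.2 (G a.1).1 (G a.1).2

/-- The head of an arc of `G⃗`. -/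
def arcHead {V E : Type} (G : E → V × V) (a : E × Bool) : V :=
  cond a.2 (G a.1).2 (G a.1).1

/-- The reverse arc `a⁻¹`. -/
def arcInv {E : Type} (a : E × Bool) : E × Bool := (a.1, !a.2)

/-- `|F ∩ δ^out(v)|`, the number of arcs of `F` leaving `v`. -/
noncomputable def outCount {V E : Type} (G : E → V × V) (F : Finset (E × Bool)) (v : V) : ℕ :=
  Set.ncard {a : E × Bool | a ∈ F ∧ arcTail G a = v}

/-- `|F ∩ δ^in(v)|`, the number of arcs of `F` entering `v`. -/
noncomputable def inCount {V E : Type} (G : E → V × V) (F : Finset (E × Bool)) (v : V) : ℕ :=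
  Set.ncard {a : E × Bool | a ∈ F ∧ arcHead G a = v}

/-- `F ⊆ AG⃗` is balanced (w.r.t. the source `s` and the sink `t`) if
`|F ∩ δ^in(v)| = |F ∩ δ^out(v)|` for every `v ∈ VG − {s, t}`. -/
def BalancedArcs {V E : Type} (G : E → V × V) (s t : V) (F : Finset (E × Bool)) : Prop :=
  ∀ v : V, v ≠ s → v ≠ t → inCount G F v = outCount G F v

/-- The value `val(F) = |F ∩ δ^out(s)| − |F ∩ δ^in(s)|` of an arc set. -/
noncomputable def bval {V E : Type} (G : E → V × V) (s : V) (F : Finset (E × Bool)) : ℤ :=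
  (outCount G F s : ℤ) - (inCount G F s : ℤ)

/-- Directed walks in `G⃗`. -/
inductive DWalk {V E : Type} (G : E → V × V) : V → V → Type where
  | nil (v : V) : DWalk G v v
  | cons {u v w : V} (a : E × Bool) (ht : arcTail G a = u) (hh : arcHead G a = v)
      (tail : DWalk G v w) : DWalk G u w

namespace DWalk
/-- The list of arcs traversed by a directed walk. -/
def arcs {V E : Type} {G : E → V × V} : {u v : V} → DWalk G u v → List (E × Bool)
  | _, _, nil _ => []
  | _, _, cons a _ _ p => a :: p.arcs
end DWalk

/-- The arcs of the residual digraph `G⃗_F = (VG, (AG⃗ − F) ∪ F⁻¹)`. -/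
def residArcs {E : Type} (F : Finset (E × Bool)) : Set (E × Bool) :=
  {a | a ∉ F ∨ arcInv a ∈ F}

/-- `v` is reachable from `u` in the residual digraph `G⃗_F`. -/
def ResidReach {V E : Type} (G : E → V × V) (F : Finset (E × Bool)) (u v : V) : Prop :=
  ∃ p : DWalk G u v, ∀ a ∈ p.arcs, a ∈ residArcs F

/-!
For a balanced `F` and any `U` with `s ∈ U`, `t ∉ U`, summing the balance conditions over `U`
gives `val F = |F ∩ δ^out(U)| - |F ∩ δ^in(U)| ≤ d_G(U)`, with equality exactly when every arc
leaving `U` lies in `F` and its reverse does not, i.e. when no arc of `G⃗_F` leaves `U`.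
The set of nodes reachable from `s` in `G⃗_F` is closed in this sense, so it attains equality,
which bounds the value of every balanced set by `val F`. Conversely every `U'` attaining equality
is closed, hence contains everything reachable from `s`.
-/

open Finset

namespace DWalk

variable {V E : Type} {G : E → V × V}

def concat : {u v w : V} → DWalk G u v → (a : E × Bool) → arcTail G a = v → arcHead G a = w →
    DWalk G u w
  | _, _, _, nil _, a, ht, hh => cons a ht hh (nil _)
  | _, _, _, cons b ht' hh' p, a, ht, hh => cons b ht' hh' (p.concat a ht hh)

theorem arcs_concat : ∀ {u v w : V} (p : DWalk G u v) (a : E × Bool) (ht : arcTail G a = v)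
    (hh : arcHead G a = w), (p.concat a ht hh).arcs = p.arcs ++ [a]
  | _, _, _, nil _, _, _, _ => rfl
  | _, _, _, cons _ _ _ p, a, ht, hh => by simp [concat, arcs, arcs_concat p a ht hh]

end DWalk

section Residual

variable {V E : Type} (G : E → V × V) (F : Finset (E × Bool))

def ResidClosed (U : Set V) : Prop :=
  ∀ a ∈ residArcs F, arcTail G a ∈ U → arcHead G a ∈ U

variable {G F}

theorem ResidReach.refl (s : V) : ResidReach G F s s :=
  ⟨.nil s, by simp [DWalk.arcs]⟩

theorem ResidReach.mem_of_residClosed {U : Set V} (hU : ResidClosed G F U) {u v : V}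
    (huv : ResidReach G F u v) (hu : u ∈ U) : v ∈ U := by
  obtain ⟨p, hp⟩ := huv
  induction p with
  | nil => exact hu
  | cons a ht hh p ih =>
    simp only [DWalk.arcs, List.mem_cons, forall_eq_or_imp] at hp
    exact ih (hh ▸ hU a hp.1 (ht ▸ hu)) hp.2

theorem residClosed_setOf_residReach (s : V) : ResidClosed G F {v | ResidReach G F s v} := by
  rintro a ha ⟨p, hp⟩
  refine ⟨p.concat a rfl rfl, fun b hb => ?_⟩
  rw [DWalk.arcs_concat, List.mem_append, List.mem_singleton] at hb
  rcases hb with hb | rfl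
  exacts [hp b hb, ha]

end Residual

section Counting

open scoped Classical

variable {V E : Type} (G : E → V × V)

@[simp] theorem arcTail_arcInv (a : E × Bool) : arcTail G (arcInv a) = arcHead G a := by
  obtain ⟨e, b⟩ := a
  cases b <;> rfl

@[simp] theorem arcHead_arcInv (a : E × Bool) : arcHead G (arcInv a) = arcTail G a := by
  obtain ⟨e, b⟩ := a
  cases b <;> rfl

@[simp] theorem arcInv_arcInv (a : E × Bool) : arcInv (arcInv a) = a := by
  simp [arcInv]

theorem outCount_eq_card (F : Finset (E × Bool)) (v : V) :
    outCount G F v = #{a ∈ F | arcTail G a = v} := by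
  rw [outCount, ← Set.ncard_coe_finset]
  simp

theorem inCount_eq_card (F : Finset (E × Bool)) (v : V) :
    inCount G F v = #{a ∈ F | arcHead G a = v} := by
  rw [inCount, ← Set.ncard_coe_finset]
  simp

theorem sum_outCount_sub_inCount (F : Finset (E × Bool)) (T : Finset V) :
    ∑ v ∈ T, ((outCount G F v : ℤ) - inCount G F v) =
      #{a ∈ F | arcTail G a ∈ T} - #{a ∈ F | arcHead G a ∈ T} := by
  simp only [outCount_eq_card, inCount_eq_card, sum_sub_distrib, ← Nat.cast_sum]
  congr 2 <;> exact sum_card_fiberwise_eq_card_filter _ _ _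

end Counting

section Cut

open scoped Classical

variable {V E : Type} {G : E → V × V} {s t : V} {F : Finset (E × Bool)} {U : Set V}

theorem bval_eq_card_filter_sub_card_filter (hbal : BalancedArcs G s t F) (hs : s ∈ U)
    (ht : t ∉ U) :
    bval G s F = #{a ∈ F | arcTail G a ∈ U} - #{a ∈ F | arcHead G a ∈ U} := by
  -- `U` may be infinite: sum over `s` and the vertices of `U` met by `F`.
  set T : Finset V := insert s {v ∈ F.image (arcTail G) ∪ F.image (arcHead G) | v ∈ U}
  have hT : ∀ a ∈ F,
      (arcTail G a ∈ T ↔ arcTail G a ∈ U) ∧ (arcHead G a ∈ T ↔ arcHead G a ∈ U) := by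
    intro a ha
    simp only [T, mem_insert, mem_filter, mem_union, mem_image]
    constructor <;> constructor <;> grind
  calc bval G s F = ∑ v ∈ T, ((outCount G F v : ℤ) - inCount G F v) := by
        rw [sum_eq_single_of_mem s (mem_insert_self _ _), bval]
        intro v hv hvs
        rw [hbal v hvs (by grind), sub_self]
    _ = #{a ∈ F | arcTail G a ∈ U} - #{a ∈ F | arcHead G a ∈ U} := by
        rw [sum_outCount_sub_inCount, filter_congr fun a ha => (hT a ha).1,
          filter_congr fun a ha => (hT a ha).2]

variable [Fintype E]

variable (G) in
noncomputable def outArcs (U : Set V) : Finset (E × Bool) :=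
  {a | arcTail G a ∈ U ∧ arcHead G a ∉ U}

@[simp] theorem mem_outArcs {a : E × Bool} :
    a ∈ outArcs G U ↔ arcTail G a ∈ U ∧ arcHead G a ∉ U := by
  simp [outArcs]

theorem card_outArcs : #(outArcs G U) = mcut G U := by
  have hinj : Set.InjOn Prod.fst (outArcs G U : Set (E × Bool)) := by
    rintro ⟨e, b⟩ hb ⟨e', b'⟩ hb' (rfl : e = e')
    cases b <;> cases b' <;> simp_all [arcTail, arcHead]
  have himage : Prod.fst '' (outArcs G U : Set (E × Bool)) =
      {e | ((G e).1 ∈ U ∧ (G e).2 ∉ U) ∨ ((G e).2 ∈ U ∧ (G e).1 ∉ U)} := by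
    ext e
    constructor
    · rintro ⟨⟨e, b⟩, hb, rfl⟩
      cases b <;> simp_all [arcTail, arcHead]
    · rintro (he | he)
      exacts [⟨(e, true), by simpa [arcTail, arcHead] using he, rfl⟩,
        ⟨(e, false), by simpa [arcTail, arcHead] using he, rfl⟩]
  rw [mcut, ← himage, hinj.ncard_image, Set.ncard_coe_finset]

theorem bval_eq_card_sub_card (hbal : BalancedArcs G s t F) (hs : s ∈ U) (ht : t ∉ U) :
    bval G s F = #{a ∈ outArcs G U | a ∈ F} - #{a ∈ outArcs G U | arcInv a ∈ F} := by
  have htail : #{a ∈ F | arcTail G a ∈ U} =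
      #{a ∈ F | arcTail G a ∈ U ∧ arcHead G a ∈ U} + #{a ∈ outArcs G U | a ∈ F} := by
    rw [← card_filter_add_card_filter_not (s := {a ∈ F | arcTail G a ∈ U})
      (fun a => arcHead G a ∈ U), filter_filter, filter_filter]
    congr 2
    ext a
    simp only [mem_filter, mem_outArcs]
    tauto
  have hhead : #{a ∈ F | arcHead G a ∈ U} =
      #{a ∈ F | arcTail G a ∈ U ∧ arcHead G a ∈ U} + #{a ∈ outArcs G U | arcInv a ∈ F} := by
    rw [← card_filter_add_card_filter_not (s := {a ∈ F | arcHead G a ∈ U})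
      (fun a => arcTail G a ∈ U), filter_filter, filter_filter]
    congr 1
    · congr 1
      ext a
      simp only [mem_filter]
      tauto
    -- reversal matches the arcs of `F` entering `U` with the arcs leaving `U` reversed in `F`
    · exact card_nbij' arcInv arcInv (fun a => by simp +contextual) (fun a => by simp +contextual)
        (fun a _ => arcInv_arcInv a) (fun a _ => arcInv_arcInv a)
  rw [bval_eq_card_filter_sub_card_filter hbal hs ht, htail, hhead]
  push_cast
  ring

theorem bval_le_mcut (hbal : BalancedArcs G s t F) (hs : s ∈ U) (ht : t ∉ U) :
    bval G s F ≤ mcut G U := by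
  rw [bval_eq_card_sub_card hbal hs ht, ← card_outArcs]
  have := card_filter_le (outArcs G U) (· ∈ F)
  omega

theorem mcut_eq_bval_iff (hbal : BalancedArcs G s t F) (hs : s ∈ U) (ht : t ∉ U) :
    (mcut G U : ℤ) = bval G s F ↔ ResidClosed G F U := by
  rw [bval_eq_card_sub_card hbal hs ht, ← card_outArcs]
  have := card_filter_le (outArcs G U) (· ∈ F)
  calc _ ↔ #{a ∈ outArcs G U | a ∈ F} = #(outArcs G U) ∧
        #{a ∈ outArcs G U | arcInv a ∈ F} = 0 := by omega
    _ ↔ ∀ a ∈ outArcs G U, a ∉ residArcs F := by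
        rw [card_filter_eq_iff, card_eq_zero, filter_eq_empty_iff, ← forall₂_and]
        simp [residArcs]
    _ ↔ ResidClosed G F U := by
        simp only [ResidClosed, mem_outArcs]
        grind

end Cut

theorem statement8_general {V E : Type} [Fintype E]
    (G : E → V × V) (s t : V)
    (F : Finset (E × Bool)) (hbal : BalancedArcs G s t F)
    (hnopath : ¬ ResidReach G F s t)
    (U : Set V) (hU : U = {v : V | ResidReach G F s v}) :
    (∀ F' : Finset (E × Bool), BalancedArcs G s t F' → bval G s F' ≤ bval G s F) ∧
      (mcut G U : ℤ) = bval G s F ∧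
      (∀ U' : Set V, s ∈ U' → t ∉ U' → (mcut G U' : ℤ) = bval G s F → U ⊆ U') := by
  have hs : s ∈ U := hU ▸ ResidReach.refl s
  have ht : t ∉ U := hU ▸ hnopath
  have hcut : (mcut G U : ℤ) = bval G s F :=
    (mcut_eq_bval_iff hbal hs ht).2 (hU ▸ residClosed_setOf_residReach s)
  refine ⟨fun F' hbal' => hcut ▸ bval_le_mcut hbal' hs ht, hcut, ?_⟩
  intro U' hs' ht' hcut' v hv
  rw [hU] at hv
  exact hv.mem_of_residClosed ((mcut_eq_bval_iff hbal hs' ht').1 hcut') hs'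

/-- If `F` is a balanced arc set and the residual digraph
`G⃗_F` has no `s`–`t` path, then `val F` is maximum among all balanced arc
sets; the set `U` of nodes reachable from `s` in `G⃗_F` satisfies
`d_G(U) = val F`; and `U` is the inclusion-wise minimum set among all sets `U'`
with `s ∈ U'`, `t ∉ U'` and `d_G(U') = val F`. -/
theorem statement8 {V E : Type} [Fintype E]
    (G : E → V × V) (s t : V) (hst : s ≠ t)
    (F : Finset (E × Bool)) (hbal : BalancedArcs G s t F)
    (hnopath : ¬ ResidReach G F s t)
    (U : Set V) (hU : U = {v : V | ResidReach G F s v}) :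
    (∀ F' : Finset (E × Bool), BalancedArcs G s t F' → bval G s F' ≤ bval G s F) ∧
      (mcut G U : ℤ) = bval G s F ∧
      (∀ U' : Set V, s ∈ U' → t ∉ U' → (mcut G U' : ℤ) = bval G s F → U ⊆ U') :=
  statement8_general G s t F hbal hnopath U hU
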